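/- Let Ω ⊆ ℝⁿ be an open set, let E ⊆ Ω, let η > 0, and let R ⊆ ℝⁿ be a measurable set such that R ⊆ (Ω − Ω)/η and the distance from E to the complement of Ω is at least η · sup_{ξ∈R} |ξ|. Then for every Lebesgue-measurable function u : ℝⁿ → ℝⁿ, every ε > 0, and every positive integer m with mε < η, one has ∫_R F_{mε,ξ}(u, E) dξ ≤ ∫_R F_{ε,ξ}(u, Ω) dξ. -/

import Mathlib

/-!
Write `a_j = ⟪u (x + jεξ), ξ⟫`. Telescoping and Sedrakyan's form of Cauchy–Schwarz give
`(a_m - a_0)² / (mε) ≤ ∑_{j<m} (a_{j+1} - a_j)² / ε`, and `arctan` is subadditive on `[0, ∞)`,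
so the integrand of `F_{mε,ξ}` at `x` is at most the sum of the integrands of `F_{ε,ξ}` at the
points `x + jεξ`, `j < m`. The distance hypothesis keeps all of these points (and `x + mεξ`) in
`Ω`, so by translation invariance each of the `m` shifted integrals over `E ∩ (E - mεξ)` is at
most the integral over `Ω ∩ (Ω - εξ)`; the `m` copies cancel the factor `1/m`.
-/

open MeasureTheory
open scoped ENNReal

/-- The directional functional `F_{ε,ξ}(u,E)`, valued in `[0,∞]`:
`F_{ε,ξ}(u,E) = (1/ε) ∫_{E ∩ (E - εξ)} arctan(((u(x+εξ) - u(x))·ξ)²/ε) dx`. -/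
noncomputable def dirF (n : ℕ) (ε : ℝ) (ξ : EuclideanSpace ℝ (Fin n))
    (u : EuclideanSpace ℝ (Fin n) → EuclideanSpace ℝ (Fin n))
    (E : Set (EuclideanSpace ℝ (Fin n))) : ℝ≥0∞ :=
  ENNReal.ofReal (1 / ε) *
    ∫⁻ x in E ∩ ((fun y => y - ε • ξ) '' E),
      ENNReal.ofReal (Real.arctan ((inner ℝ (u (x + ε • ξ) - u x) ξ : ℝ) ^ 2 / ε))

open Finset Real

namespace Real

theorem arctan_add_le_add_arctan {a b : ℝ} (ha : 0 ≤ a) (hb : 0 ≤ b) :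
    arctan (a + b) ≤ arctan a + arctan b := by
  rcases lt_or_ge (a * b) 1 with hab | hab
  · rw [arctan_add hab]
    refine arctan_strictMono.monotone ?_
    rw [le_div_iff₀ (by linarith [mul_nonneg ha hb])]
    nlinarith [mul_nonneg (add_nonneg ha hb) (mul_nonneg ha hb)]
  · -- for `ab ≥ 1`, `arctan a ≥ arctan b⁻¹ = π/2 - arctan b`, and `arctan` is below `π/2`
    have hb' : 0 < b := by nlinarith
    have hba : b⁻¹ ≤ a := by rw [inv_le_iff_one_le_mul₀ hb']; linarith
    linarith [arctan_strictMono.monotone hba, arctan_lt_pi_div_two (a + b),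
      arctan_inv_of_pos hb']

theorem arctan_sum_le_sum_arctan {ι : Type*} (s : Finset ι) {f : ι → ℝ}
    (hf : ∀ i ∈ s, 0 ≤ f i) : arctan (∑ i ∈ s, f i) ≤ ∑ i ∈ s, arctan (f i) := by
  induction s using Finset.cons_induction with
  | empty => simp
  | cons a s _ ih =>
    rw [sum_cons, sum_cons]
    have hfs : ∀ i ∈ s, 0 ≤ f i := fun i hi => hf i (mem_cons_of_mem hi)
    calc arctan (f a + ∑ i ∈ s, f i) ≤ arctan (f a) + arctan (∑ i ∈ s, f i) :=
          arctan_add_le_add_arctan (hf a (mem_cons_self a s)) (sum_nonneg hfs)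
      _ ≤ arctan (f a) + ∑ i ∈ s, arctan (f i) := by gcongr; exact ih hfs

theorem arctan_sq_sub_div_le_sum {a : ℕ → ℝ} {ε : ℝ} (hε : 0 < ε) (m : ℕ) :
    arctan ((a m - a 0) ^ 2 / (m * ε)) ≤
      ∑ j ∈ range m, arctan ((a (j + 1) - a j) ^ 2 / ε) := by
  have hsedrakyan := sq_sum_div_le_sum_sq_div (range m) (fun j => a (j + 1) - a j)
    (g := fun _ => ε) fun _ _ => hε
  rw [sum_range_sub, sum_const, card_range, nsmul_eq_mul] at hsedrakyan
  exact (arctan_strictMono.monotone hsedrakyan).trans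
    (arctan_sum_le_sum_arctan _ fun j _ => by positivity)

end Real

theorem add_smul_mem_of_forall_dist_le {V : Type*} [NormedAddCommGroup V] [NormedSpace ℝ V]
    {Ω E : Set V} (hE : E ⊆ Ω) {η : ℝ} {ξ : V} (hdist : ∀ x ∈ E, ∀ y ∉ Ω, η * ‖ξ‖ ≤ dist x y)
    {x : V} (hx : x ∈ E) {t : ℝ} (ht₀ : 0 ≤ t) (htη : t < η) : x + t • ξ ∈ Ω := by
  rcases eq_or_ne ξ 0 with rfl | hξ
  · simpa using hE hx
  by_contra hy
  have hle := hdist x hx _ hy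
  rw [dist_self_add_right, norm_smul, Real.norm_of_nonneg ht₀] at hle
  exact (mul_lt_mul_of_pos_right htη (norm_pos_iff.mpr hξ)).not_ge hle

section dirF

variable {n : ℕ}

noncomputable def dirIntegrand (n : ℕ) (ε : ℝ) (ξ : EuclideanSpace ℝ (Fin n))
    (u : EuclideanSpace ℝ (Fin n) → EuclideanSpace ℝ (Fin n))
    (x : EuclideanSpace ℝ (Fin n)) : ℝ≥0∞ :=
  ENNReal.ofReal (arctan ((inner ℝ (u (x + ε • ξ) - u x) ξ : ℝ) ^ 2 / ε))

theorem dirF_eq (ε : ℝ) (ξ : EuclideanSpace ℝ (Fin n))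
    (u : EuclideanSpace ℝ (Fin n) → EuclideanSpace ℝ (Fin n))
    (E : Set (EuclideanSpace ℝ (Fin n))) :
    dirF n ε ξ u E =
      ENNReal.ofReal (1 / ε) * ∫⁻ x in E ∩ ((· - ε • ξ) '' E), dirIntegrand n ε ξ u x :=
  rfl

theorem measurable_dirIntegrand {u : EuclideanSpace ℝ (Fin n) → EuclideanSpace ℝ (Fin n)}
    (hu : Measurable u) (ε : ℝ) (ξ : EuclideanSpace ℝ (Fin n)) :
    Measurable (dirIntegrand n ε ξ u) := by
  unfold dirIntegrand
  fun_prop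

theorem dirIntegrand_mul_le_sum {ε : ℝ} (hε : 0 < ε) (m : ℕ) (ξ : EuclideanSpace ℝ (Fin n))
    (u : EuclideanSpace ℝ (Fin n) → EuclideanSpace ℝ (Fin n)) (x : EuclideanSpace ℝ (Fin n)) :
    dirIntegrand n (m * ε) ξ u x ≤
      ∑ j ∈ range m, dirIntegrand n ε ξ u (x + (j * ε) • ξ) := by
  set a : ℕ → ℝ := fun j => inner ℝ (u (x + (j * ε) • ξ)) ξ
  have hstep : ∀ j : ℕ, x + (j * ε) • ξ + ε • ξ = x + ((j + 1 : ℕ) * ε) • ξ := fun j => by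
    rw [add_assoc, ← add_smul]; push_cast; ring_nf
  have hsum : ∑ j ∈ range m, dirIntegrand n ε ξ u (x + (j * ε) • ξ) =
      ENNReal.ofReal (∑ j ∈ range m, arctan ((a (j + 1) - a j) ^ 2 / ε)) := by
    rw [ENNReal.ofReal_sum_of_nonneg fun j _ => arctan_nonneg.mpr (by positivity)]
    refine sum_congr rfl fun j _ => ?_
    rw [dirIntegrand, hstep, inner_sub_left]
  rw [hsum, dirIntegrand]
  refine ENNReal.ofReal_le_ofReal (le_trans (le_of_eq ?_) (arctan_sq_sub_div_le_sum hε m))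
  simp [a, inner_sub_left]

theorem setLIntegral_dirIntegrand_add_le {ε : ℝ} {ξ v : EuclideanSpace ℝ (Fin n)}
    (u : EuclideanSpace ℝ (Fin n) → EuclideanSpace ℝ (Fin n))
    {s Ω : Set (EuclideanSpace ℝ (Fin n))} (hs : ∀ x ∈ s, x + v ∈ Ω ∩ ((· - ε • ξ) '' Ω)) :
    ∫⁻ x in s, dirIntegrand n ε ξ u (x + v) ≤
      ∫⁻ y in Ω ∩ ((· - ε • ξ) '' Ω), dirIntegrand n ε ξ u y :=
  calc ∫⁻ x in s, dirIntegrand n ε ξ u (x + v)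
      ≤ ∫⁻ x in (· + v) ⁻¹' (Ω ∩ ((· - ε • ξ) '' Ω)), dirIntegrand n ε ξ u (x + v) :=
        lintegral_mono_set hs
    _ = ∫⁻ y in Ω ∩ ((· - ε • ξ) '' Ω), dirIntegrand n ε ξ u y :=
        (measurePreserving_add_right volume v).setLIntegral_comp_preimage_emb
          (measurableEmbedding_addRight v) _ _

theorem dirF_mul_le_of_forall_add_mem {ε : ℝ} (hε : 0 < ε) {m : ℕ} (hm : 0 < m)
    {ξ : EuclideanSpace ℝ (Fin n)} {u : EuclideanSpace ℝ (Fin n) → EuclideanSpace ℝ (Fin n)}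
    (hu : Measurable u) {E Ω : Set (EuclideanSpace ℝ (Fin n))}
    (hseg : ∀ x ∈ E ∩ ((· - (m * ε) • ξ) '' E), ∀ k ≤ m, x + (k * ε) • ξ ∈ Ω) :
    dirF n (m * ε) ξ u E ≤ dirF n ε ξ u Ω := by
  set s := E ∩ ((· - (m * ε) • ξ) '' E)
  have hstep : ∀ j < m, ∀ x ∈ s, x + (j * ε) • ξ ∈ Ω ∩ ((· - ε • ξ) '' Ω) := by
    intro j hj x hx
    refine ⟨hseg x hx j hj.le, x + ((j + 1 : ℕ) * ε) • ξ, hseg x hx (j + 1) hj, ?_⟩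
    simp only [Nat.cast_add, Nat.cast_one, add_mul, one_mul, add_smul]
    abel
  have hscale : ENNReal.ofReal (1 / (m * ε)) * m = ENNReal.ofReal (1 / ε) := by
    rw [← ENNReal.ofReal_natCast m, ← ENNReal.ofReal_mul (by positivity)]
    congr 1
    field_simp
  rw [dirF_eq, dirF_eq]
  calc ENNReal.ofReal (1 / (m * ε)) * ∫⁻ x in s, dirIntegrand n (m * ε) ξ u x
      ≤ ENNReal.ofReal (1 / (m * ε)) *
          ∑ j ∈ range m, ∫⁻ x in s, dirIntegrand n ε ξ u (x + (j * ε) • ξ) := by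
        rw [← lintegral_finsetSum
          (f := fun (j : ℕ) x => dirIntegrand n ε ξ u (x + (j * ε) • ξ)) _
          fun j _ => (measurable_dirIntegrand hu ε ξ).comp (measurable_add_const _)]
        gcongr with x
        exact dirIntegrand_mul_le_sum hε m ξ u x
    _ ≤ ENNReal.ofReal (1 / (m * ε)) *
          ∑ _j ∈ range m, ∫⁻ y in Ω ∩ ((· - ε • ξ) '' Ω), dirIntegrand n ε ξ u y := by
        gcongr _ * ∑ j ∈ _, ?_ with j hj
        exact setLIntegral_dirIntegrand_add_le u (hstep j (mem_range.mp hj))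
    _ = ENNReal.ofReal (1 / ε) * ∫⁻ y in Ω ∩ ((· - ε • ξ) '' Ω), dirIntegrand n ε ξ u y := by
        rw [sum_const, card_range, nsmul_eq_mul, ← mul_assoc, hscale]

end dirF

theorem stmt4 (n : ℕ) (Ω E : Set (EuclideanSpace ℝ (Fin n)))
    (hE : E ⊆ Ω) (η : ℝ)
    (R : Set (EuclideanSpace ℝ (Fin n))) (hR : MeasurableSet R)
    (hdist : ∀ ξ ∈ R, ∀ x ∈ E, ∀ y ∉ Ω, η * ‖ξ‖ ≤ dist x y)
    (u : EuclideanSpace ℝ (Fin n) → EuclideanSpace ℝ (Fin n)) (hu : Measurable u)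
    (ε : ℝ) (hε : 0 < ε) (m : ℕ) (hm : 0 < m) (hmε : m * ε < η) :
    ∫⁻ ξ in R, dirF n (m * ε) ξ u E ≤ ∫⁻ ξ in R, dirF n ε ξ u Ω := by
  refine setLIntegral_mono' hR fun ξ hξ => dirF_mul_le_of_forall_add_mem hε hm hu ?_
  intro x hx k hk
  have hkε : k * ε ≤ m * ε := by gcongr
  exact add_smul_mem_of_forall_dist_le hE (hdist ξ hξ) hx.1 (by positivity) (hkε.trans_lt hmε)
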